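/- Axiom (M1) is valid in 𝓜(Tm): for all a, b ∈ V, x ∈ □̃₁(¬̃ a), u ∈ a →̃ b, y ∈ □̃₁ u, and w ∈ x →̃ y, we have w ∈ D = {T, t}. (This encodes validity of □¬φ → □(φ → ψ).) -/

import Mathlib

inductive MV | T | t | f | F
deriving DecidableEq

open MV

def D : Set MV := {T, t}

def mneg : MV → MV
  | T => F | t => f | f => t | F => T

def mimp : MV → MV → Set MV
  | T, b => {b}
  | t, T => {T} | t, t => {T, t} | t, f => {f} | t, F => {f}
  | f, T => {T} | f, t => {T, t} | f, f => {T, t} | f, F => {t}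
  | F, _ => {T}

def box1 : MV → Set MV
  | T => {T, t} | _ => {f, F}

def box2 : MV → Set MV
  | T => {T} | _ => {f, F}

def box3 : MV → Set MV
  | T => {T} | _ => {F}

/-! The values of `□̃₁ v` are designated exactly when `v = T`, so a designated `x ∈ □̃₁(¬̃ a)`
forces `a = F`; then `u ∈ F →̃ b = {T}` and `y ∈ □̃₁ T = D`. Hence `x ∈ D → y ∈ D`, and
whenever designation of its arguments respects classical implication, `x →̃ y ⊆ D`. -/

theorem mneg_eq_T_iff {a : MV} : mneg a = T ↔ a = F := by
  cases a <;> simp [mneg]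

theorem eq_T_of_mem_mimp_F {b u : MV} (hu : u ∈ mimp F b) : u = T := hu

theorem mem_D_iff_of_mem_box1 {v x : MV} (hx : x ∈ box1 v) : x ∈ D ↔ v = T := by
  cases v <;> cases x <;> simp_all [box1, D]

theorem mimp_subset_D {x y : MV} (h : x ∈ D → y ∈ D) : mimp x y ⊆ D := by
  cases x <;> cases y <;> simp_all [mimp, D]

theorem axM1_valid :
    ∀ a b x u y w : MV, x ∈ box1 (mneg a) → u ∈ mimp a b → y ∈ box1 u →
      w ∈ mimp x y → w ∈ D := by
  intro a b x u y w hx hu hy hw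
  refine mimp_subset_D (fun hxD => ?_) hw
  obtain rfl : a = F := mneg_eq_T_iff.mp ((mem_D_iff_of_mem_box1 hx).mp hxD)
  exact (mem_D_iff_of_mem_box1 hy).mpr (eq_T_of_mem_mimp_F hu)
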